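/- arXiv:1506.03613 — 2 statements merged into one kernel-verified Lean document; each statement's English description precedes it below -/
import Mathlib

section
/- For every finite, simple, connected, undirected graph G and every ε > 0 there exists a memoryless randomized robber strategy π_R^ε that is ε-optimal simultaneously for every initial position with finite value: for every (x,y) ∈ V² with v̂_{(x,y)} < ∞, inf_{π_C} v_{(x,y)}(π_C, π_R^ε) ≥ v̂_{(x,y)} − ε, where v̂_{(x,y)} is the value of the concurrent game started at (x,y). -/
open Finset Filter

noncomputable section

variable {V : Type*} [Fintype V] [DecidableEq V]

/-- The closed neighborhood `N[u]` of a vertex `u`: `u` together with its neighbors. -/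
def nbhd (G : SimpleGraph V) [DecidableRel G.Adj] (u : V) : Finset V :=
  insert u (G.neighborFinset u)

lemma nbhd_nonempty (G : SimpleGraph V) [DecidableRel G.Adj] (u : V) :
    (nbhd G u).Nonempty :=
  ⟨u, Finset.mem_insert_self u _⟩

/-! ### The single-cop concurrent game, with the expected-capture-time payoff -/

/-- A randomized strategy in the single-cop concurrent game: to each finite history of
positions (cop location, robber location) it assigns a distribution over next moves. -/
abbrev Strat (V : Type*) := List (V × V) → PMF V

/-- A strategy is memoryless if the distribution it assigns depends only on the
current (most recent) position. -/
def Memoryless (π : Strat V) : Prop :=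
  ∀ h₁ h₂ : List (V × V), h₁.getLast? = h₂.getLast? → π h₁ = π h₂

/-- The single-cop CCCR transition function: simultaneous moves within closed
neighborhoods (illegal moves ignored), capture positions are absorbing, and a swap of
adjacent vertices is an \"en passant\" capture. -/
def step1 (G : SimpleGraph V) [DecidableRel G.Adj] (p : V × V) (u w : V) : V × V :=
  if p.1 = p.2 then p
  else
    let u' := if u ∈ nbhd G p.1 then u else p.1
    let w' := if w ∈ nbhd G p.2 then w else p.2
    if u' = p.2 ∧ w' = p.1 then (u', u') else (u', w')

/-- The distribution over histories of the first `t+1` positions, induced by the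
strategies `πC, πR` and the initial position `init`. -/
def play1 (G : SimpleGraph V) [DecidableRel G.Adj]
    (πC πR : Strat V) (init : V × V) : ℕ → PMF (List (V × V))
  | 0 => PMF.pure [init]
  | (t+1) => (play1 G πC πR init t).bind fun h =>
      (πC h).bind fun u => (πR h).bind fun w =>
        PMF.pure (h ++ [step1 G (h.getLast?.getD init) u w])

/-- The probability that cop and robber occupy different vertices at time `t`
(capture is absorbing, so this is the probability that the robber is still free). -/
def freeProb1 (G : SimpleGraph V) [DecidableRel G.Adj]
    (πC πR : Strat V) (init : V × V) (t : ℕ) : ENNReal :=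
  (play1 G πC πR init t).toOuterMeasure
    {h | (h.getLast?.getD init).1 ≠ (h.getLast?.getD init).2}

/-- The payoff: the expected number of rounds `t ≥ 0` at which cop and robber occupy
different vertices, i.e. the expected capture time. -/
def payoff (G : SimpleGraph V) [DecidableRel G.Adj]
    (πC πR : Strat V) (init : V × V) : ENNReal :=
  ∑' t : ℕ, freeProb1 G πC πR init t

/-- The (upper) value of the game started at `init`; the cop minimizes and the robber
maximizes the expected capture time. -/
def gameValue (G : SimpleGraph V) [DecidableRel G.Adj] (init : V × V) : ENNReal :=
  ⨅ πC : Strat V, ⨆ πR : Strat V, payoff G πC πR init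

/-!
Value iteration with the Shapley operator `f ↦ (p ↦ 1 + val (u, w ↦ f (step p u w)))`, which is `0`
at captures, produces the values `truncValue G n` of the games stopped after `n` rounds; they
increase with `n`. A robber who plays at every position an optimal mixed strategy of the one-round
matrix game valued by `truncValue G N` makes `truncValue G N` a subsolution of the Bellman equation,
so he guarantees `truncValue G N init` from every initial position. Conversely, a cluster point of
the cop's optimal strategies in these one-round games makes `limValue = ⨆ n, truncValue G n` a
supersolution, so `gameValue ≤ limValue`. A single level `N`, large enough for the finitely many
positions of finite value, therefore yields an `ε`-optimal memoryless robber strategy.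
-/

open scoped ENNReal

namespace MatrixGame

variable {ι κ : Type*} [Fintype ι] [Fintype κ]

lemma le_sum_mul_of_mem_stdSimplex {σ : ι → ℝ} (hσ : σ ∈ stdSimplex ℝ ι) {x : ι → ℝ} {c : ℝ}
    (h : ∀ i, c ≤ x i) : c ≤ ∑ i, σ i * x i :=
  calc c = ∑ i, σ i * c := by rw [← Finset.sum_mul, hσ.2, one_mul]
    _ ≤ ∑ i, σ i * x i := by gcongr with i; exacts [hσ.1 i, h i]

lemma sum_mul_le_of_mem_stdSimplex {σ : ι → ℝ} (hσ : σ ∈ stdSimplex ℝ ι) {x : ι → ℝ} {c : ℝ}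
    (h : ∀ i, x i ≤ c) : ∑ i, σ i * x i ≤ c :=
  calc ∑ i, σ i * x i ≤ ∑ i, σ i * c := by gcongr with i; exacts [hσ.1 i, h i]
    _ = c := by rw [← Finset.sum_mul, hσ.2, one_mul]

variable [Nonempty ι] [Nonempty κ]

/-- Von Neumann's minimax theorem; the row player `u` pays `A u w` to the column player `w`. -/
theorem exists_saddlePoint (A : ι → κ → ℝ) :
    ∃ c : ℝ, ∃ α ∈ stdSimplex ℝ ι, ∃ ρ ∈ stdSimplex ℝ κ,
      (∀ u, c ≤ ∑ w, ρ w * A u w) ∧ ∀ w, ∑ u, α u * A u w ≤ c := by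
  classical
  let B : (ι → ℝ) →ₗ[ℝ] (κ → ℝ) →ₗ[ℝ] ℝ := Matrix.toLinearMap₂' ℝ (Matrix.of A)
  obtain ⟨α, hα, ρ, hρ, hsaddle⟩ := Sion.exists_isSaddlePointOn (f := fun x y => B x y)
    ⟨_, ite_eq_mem_stdSimplex ℝ (Classical.arbitrary ι)⟩ (convex_stdSimplex ℝ ι)
    (isCompact_stdSimplex ℝ ι)
    (fun y _ => (B.flip y).continuous_of_finiteDimensional.lowerSemicontinuous.lowerSemicontinuousOn _)
    (fun y _ => ((B.flip y).convexOn (convex_stdSimplex ℝ ι)).quasiconvexOn)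
    (convex_stdSimplex ℝ κ) ⟨_, ite_eq_mem_stdSimplex ℝ (Classical.arbitrary κ)⟩
    (isCompact_stdSimplex ℝ κ)
    (fun x _ => (B x).continuous_of_finiteDimensional.upperSemicontinuous.upperSemicontinuousOn _)
    (fun x _ => ((B x).concaveOn (convex_stdSimplex ℝ κ)).quasiconcaveOn)
  refine ⟨B α ρ, α, hα, ρ, hρ, fun u => ?_, fun w => ?_⟩
  · refine (hsaddle _ (ite_eq_mem_stdSimplex ℝ u) ρ hρ).trans_eq ?_
    simp [B, Matrix.toLinearMap₂'_apply, mul_comm]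
  · refine le_of_eq_of_le ?_ (hsaddle α hα _ (ite_eq_mem_stdSimplex ℝ w))
    simp [B, Matrix.toLinearMap₂'_apply]

def value (A : ι → κ → ℝ) : ℝ := (exists_saddlePoint A).choose

def minimizer (A : ι → κ → ℝ) : ι → ℝ := (exists_saddlePoint A).choose_spec.choose

def maximizer (A : ι → κ → ℝ) : κ → ℝ := (exists_saddlePoint A).choose_spec.choose_spec.2.choose

lemma minimizer_mem (A : ι → κ → ℝ) : minimizer A ∈ stdSimplex ℝ ι :=
  (exists_saddlePoint A).choose_spec.choose_spec.1

lemma maximizer_mem (A : ι → κ → ℝ) : maximizer A ∈ stdSimplex ℝ κ :=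
  (exists_saddlePoint A).choose_spec.choose_spec.2.choose_spec.1

lemma value_le_sum_maximizer (A : ι → κ → ℝ) (u : ι) :
    value A ≤ ∑ w, maximizer A w * A u w :=
  (exists_saddlePoint A).choose_spec.choose_spec.2.choose_spec.2.1 u

lemma sum_minimizer_le_value (A : ι → κ → ℝ) (w : κ) :
    ∑ u, minimizer A u * A u w ≤ value A :=
  (exists_saddlePoint A).choose_spec.choose_spec.2.choose_spec.2.2 w

lemma value_mono {A B : ι → κ → ℝ} (h : ∀ u w, A u w ≤ B u w) : value A ≤ value B :=
  calc value A ≤ ∑ u, minimizer B u * ∑ w, maximizer A w * A u w :=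
        le_sum_mul_of_mem_stdSimplex (minimizer_mem B) (value_le_sum_maximizer A)
    _ = ∑ w, maximizer A w * ∑ u, minimizer B u * A u w := by
        simp only [Finset.mul_sum]
        rw [Finset.sum_comm]
        exact Finset.sum_congr rfl fun w _ => Finset.sum_congr rfl fun u _ => by ring
    _ ≤ ∑ w, maximizer A w * ∑ u, minimizer B u * B u w := by
        gcongr with w _ u _
        exacts [(maximizer_mem A).1 w, (minimizer_mem B).1 u, h u w]
    _ ≤ value B := sum_mul_le_of_mem_stdSimplex (maximizer_mem A) (sum_minimizer_le_value B)

lemma value_const (c : ℝ) : value (fun (_ : ι) (_ : κ) => c) = c := by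
  let A : ι → κ → ℝ := fun _ _ => c
  obtain ⟨w⟩ := ‹Nonempty κ›
  obtain ⟨u⟩ := ‹Nonempty ι›
  refine le_antisymm ?_ ?_
  · exact (value_le_sum_maximizer A u).trans
      (sum_mul_le_of_mem_stdSimplex (maximizer_mem A) fun _ => le_rfl)
  · exact (le_sum_mul_of_mem_stdSimplex (minimizer_mem A) fun _ => le_rfl).trans
      (sum_minimizer_le_value A w)

end MatrixGame

namespace PMF

variable {α β : Type*}

def expect (μ : PMF α) (g : α → ℝ≥0∞) : ℝ≥0∞ := ∑' a, μ a * g a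

lemma expect_pure (a : α) (g : α → ℝ≥0∞) : (PMF.pure a).expect g = g a := by
  rw [expect, tsum_eq_single a fun b hb => by simp [PMF.pure_apply, hb]]
  simp

lemma expect_bind (μ : PMF α) (f : α → PMF β) (g : β → ℝ≥0∞) :
    (μ.bind f).expect g = μ.expect fun a => (f a).expect g := by
  simp only [expect, PMF.bind_apply, ← ENNReal.tsum_mul_right, ← ENNReal.tsum_mul_left]
  rw [ENNReal.tsum_comm]
  simp only [mul_assoc]

lemma expect_mono (μ : PMF α) {f g : α → ℝ≥0∞} (h : ∀ a, f a ≤ g a) :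
    μ.expect f ≤ μ.expect g :=
  ENNReal.tsum_le_tsum fun a => mul_le_mul_right (h a) _

lemma expect_mono_of_support (μ : PMF α) {f g : α → ℝ≥0∞} (h : ∀ a ∈ μ.support, f a ≤ g a) :
    μ.expect f ≤ μ.expect g := by
  refine ENNReal.tsum_le_tsum fun a => ?_
  by_cases ha : a ∈ μ.support
  · exact mul_le_mul_right (h a ha) _
  · simp [(μ.apply_eq_zero_iff a).2 ha]

lemma expect_const (μ : PMF α) (c : ℝ≥0∞) : μ.expect (fun _ => c) = c := by
  rw [expect, ENNReal.tsum_mul_right, PMF.tsum_coe, one_mul]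

lemma expect_add (μ : PMF α) (f g : α → ℝ≥0∞) :
    μ.expect (fun a => f a + g a) = μ.expect f + μ.expect g := by
  simp only [expect, mul_add, ENNReal.tsum_add]

lemma expect_const_add (μ : PMF α) (c : ℝ≥0∞) (g : α → ℝ≥0∞) :
    μ.expect (fun a => c + g a) = c + μ.expect g := by
  rw [expect_add, expect_const]

lemma expect_const_mul (μ : PMF α) (c : ℝ≥0∞) (g : α → ℝ≥0∞) :
    μ.expect (fun a => c * g a) = c * μ.expect g := by
  simp only [expect, ← ENNReal.tsum_mul_left, mul_left_comm]

lemma expect_comm (μ : PMF α) (ν : PMF β) (f : α → β → ℝ≥0∞) :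
    μ.expect (fun a => ν.expect (f a)) = ν.expect fun b => μ.expect fun a => f a b := by
  simp only [expect, ← ENNReal.tsum_mul_left]
  rw [ENNReal.tsum_comm]
  simp only [mul_left_comm]

lemma expect_le_of_forall_le (μ : PMF α) {g : α → ℝ≥0∞} {c : ℝ≥0∞} (h : ∀ a, g a ≤ c) :
    μ.expect g ≤ c :=
  (μ.expect_mono h).trans_eq (μ.expect_const c)

variable [Fintype α]

def ofStdSimplex {σ : α → ℝ} (hσ : σ ∈ stdSimplex ℝ α) : PMF α :=
  PMF.ofFintype (fun a => ENNReal.ofReal (σ a)) <| by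
    rw [← ENNReal.ofReal_sum_of_nonneg fun a _ => hσ.1 a, hσ.2, ENNReal.ofReal_one]

lemma expect_ofStdSimplex {σ : α → ℝ} (hσ : σ ∈ stdSimplex ℝ α) (g : α → ℝ≥0∞) :
    (ofStdSimplex hσ).expect g = ∑ a, ENNReal.ofReal (σ a) * g a := by
  rw [expect, tsum_fintype]
  rfl

lemma expect_ofStdSimplex_ofReal {σ : α → ℝ} (hσ : σ ∈ stdSimplex ℝ α) {x : α → ℝ}
    (hx : ∀ a, 0 ≤ x a) :
    (ofStdSimplex hσ).expect (fun a => ENNReal.ofReal (x a)) = ENNReal.ofReal (∑ a, σ a * x a) := by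
  rw [expect_ofStdSimplex, ENNReal.ofReal_sum_of_nonneg fun a _ => mul_nonneg (hσ.1 a) (hx a)]
  simp only [ENNReal.ofReal_mul (hσ.1 _)]

end PMF

def freeInd {W : Type*} [DecidableEq W] (p : W × W) : ℝ≥0∞ := if p.1 = p.2 then 0 else 1

/-- `p₀` is only consulted on the empty history, which never occurs in a play. -/
def kernelStrat {W : Type*} (p₀ : W × W) (κ : W × W → PMF W) : Strat W :=
  fun h => κ (h.getLast?.getD p₀)

lemma kernelStrat_memoryless {W : Type*} (p₀ : W × W) (κ : W × W → PMF W) :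
    Memoryless (kernelStrat p₀ κ) :=
  fun h₁ h₂ h => by simp only [kernelStrat, h]

lemma kernelStrat_of_ne_nil {W : Type*} (p₀ : W × W) (κ : W × W → PMF W) {h : List (W × W)}
    (hh : h ≠ []) (init : W × W) : kernelStrat p₀ κ h = κ (h.getLast?.getD init) := by
  simp only [kernelStrat, List.getLast?_eq_some_getLast hh, Option.getD_some]

section Play

variable (G : SimpleGraph V) [DecidableRel G.Adj] (πC πR : Strat V) (init : V × V)

lemma step1_of_eq {p : V × V} (hp : p.1 = p.2) (u w : V) : step1 G p u w = p := by
  simp [step1, hp]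

def expectPos (g : V × V → ℝ≥0∞) (t : ℕ) : ℝ≥0∞ :=
  (play1 G πC πR init t).expect fun h => g (h.getLast?.getD init)

lemma expectPos_zero (g : V × V → ℝ≥0∞) : expectPos G πC πR init g 0 = g init :=
  PMF.expect_pure _ _

lemma expectPos_succ (g : V × V → ℝ≥0∞) (t : ℕ) :
    expectPos G πC πR init g (t + 1) = (play1 G πC πR init t).expect fun h =>
      (πC h).expect fun u => (πR h).expect fun w => g (step1 G (h.getLast?.getD init) u w) := by
  simp only [expectPos, play1, PMF.expect_bind, PMF.expect_pure, List.getLast?_concat,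
    Option.getD_some]

lemma freeProb1_eq_expectPos (t : ℕ) :
    freeProb1 G πC πR init t = expectPos G πC πR init freeInd t := by
  rw [freeProb1, PMF.toOuterMeasure_apply, expectPos, PMF.expect]
  congr 1 with h
  by_cases hh : (h.getLast?.getD init).1 = (h.getLast?.getD init).2 <;> simp [freeInd, hh]

lemma freeProb1_add_expectPos_succ (g : V × V → ℝ≥0∞) (t : ℕ) :
    freeProb1 G πC πR init t + expectPos G πC πR init g (t + 1) =
      (play1 G πC πR init t).expect fun h => freeInd (h.getLast?.getD init) +
        (πC h).expect fun u => (πR h).expect fun w => g (step1 G (h.getLast?.getD init) u w) := by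
  rw [freeProb1_eq_expectPos, expectPos_succ, expectPos, PMF.expect_add]

lemma ne_nil_of_mem_support_play1 {t : ℕ} {h : List (V × V)}
    (hh : h ∈ (play1 G πC πR init t).support) : h ≠ [] := by
  cases t with
  | zero => simp_all [play1]
  | succ t =>
    simp only [play1, PMF.mem_support_bind_iff, PMF.support_pure, Set.mem_singleton_iff] at hh
    obtain ⟨_, _, _, _, _, _, rfl⟩ := hh
    simp

end Play

section Telescope

variable {M : Type*} [AddCommMonoid M] [PartialOrder M] [IsOrderedAddMonoid M] {a e : ℕ → M}

lemma le_sum_range_add_of_le_add_succ (h : ∀ t, e t ≤ a t + e (t + 1)) (t : ℕ) :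
    e 0 ≤ ∑ s ∈ range t, a s + e t := by
  induction t with
  | zero => simp
  | succ t ih =>
    calc e 0 ≤ ∑ s ∈ range t, a s + e t := ih
      _ ≤ ∑ s ∈ range t, a s + (a t + e (t + 1)) := by gcongr; exact h t
      _ = ∑ s ∈ range (t + 1), a s + e (t + 1) := by rw [sum_range_succ, add_assoc]

lemma sum_range_add_le_of_add_succ_le (h : ∀ t, a t + e (t + 1) ≤ e t) (t : ℕ) :
    ∑ s ∈ range t, a s + e t ≤ e 0 := by
  induction t with
  | zero => simp
  | succ t ih =>
    calc ∑ s ∈ range (t + 1), a s + e (t + 1) = ∑ s ∈ range t, a s + (a t + e (t + 1)) := by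
          rw [sum_range_succ, add_assoc]
      _ ≤ ∑ s ∈ range t, a s + e t := by gcongr; exact h t
      _ ≤ e 0 := ih

end Telescope

section Verification

variable (G : SimpleGraph V) [DecidableRel G.Adj]

theorem le_payoff_of_subsolution (v : V × V → ℝ≥0∞) {C : ℝ≥0∞} (hC : C ≠ ⊤)
    (hbound : ∀ p, v p ≤ C * freeInd p) (ρ : V × V → PMF V)
    (hsub : ∀ p u, v p ≤ freeInd p + (ρ p).expect fun w => v (step1 G p u w))
    (p₀ : V × V) (πC : Strat V) (init : V × V) :
    v init ≤ payoff G πC (kernelStrat p₀ ρ) init := by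
  set πR := kernelStrat p₀ ρ with hπR
  have hstep : ∀ t, expectPos G πC πR init v t ≤
      freeProb1 G πC πR init t + expectPos G πC πR init v (t + 1) := by
    intro t
    rw [freeProb1_add_expectPos_succ]
    refine PMF.expect_mono_of_support _ fun h hh => ?_
    rw [hπR, kernelStrat_of_ne_nil p₀ ρ (ne_nil_of_mem_support_play1 G πC πR init hh) init,
      ← PMF.expect_const_add, ← PMF.expect_const (πC h) (v _)]
    exact PMF.expect_mono _ fun u => hsub _ u
  have hfree : ∀ t, expectPos G πC πR init v t ≤ C * freeProb1 G πC πR init t := by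
    intro t
    rw [freeProb1_eq_expectPos, expectPos, expectPos, ← PMF.expect_const_mul]
    exact PMF.expect_mono _ fun h => hbound _
  by_cases hpay : payoff G πC πR init = ⊤
  · exact hpay ▸ le_top
  have hlim : Tendsto (fun t => payoff G πC πR init + C * freeProb1 G πC πR init t) atTop
      (nhds (payoff G πC πR init)) := by
    simpa using (ENNReal.Tendsto.const_mul
      (ENNReal.tendsto_atTop_zero_of_tsum_ne_top hpay) (Or.inr hC)).const_add _
  refine ge_of_tendsto hlim (Eventually.of_forall fun t => ?_)
  calc v init = expectPos G πC πR init v 0 := (expectPos_zero ..).symm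
    _ ≤ ∑ s ∈ range t, freeProb1 G πC πR init s + expectPos G πC πR init v t :=
        le_sum_range_add_of_le_add_succ hstep t
    _ ≤ payoff G πC πR init + C * freeProb1 G πC πR init t :=
        add_le_add (ENNReal.sum_le_tsum _) (hfree t)

theorem payoff_le_of_supersolution (U : V × V → ℝ≥0∞) (α : V × V → PMF V)
    (hsuper : ∀ p w, freeInd p + (α p).expect (fun u => U (step1 G p u w)) ≤ U p)
    (p₀ : V × V) (πR : Strat V) (init : V × V) :
    payoff G (kernelStrat p₀ α) πR init ≤ U init := by
  set πC := kernelStrat p₀ α with hπC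
  have hstep : ∀ t, freeProb1 G πC πR init t + expectPos G πC πR init U (t + 1) ≤
      expectPos G πC πR init U t := by
    intro t
    rw [freeProb1_add_expectPos_succ]
    refine PMF.expect_mono_of_support _ fun h hh => ?_
    rw [hπC, kernelStrat_of_ne_nil p₀ α (ne_nil_of_mem_support_play1 G πC πR init hh) init,
      PMF.expect_comm, ← PMF.expect_const_add]
    exact PMF.expect_le_of_forall_le _ fun w => hsuper _ w
  rw [payoff, ENNReal.tsum_eq_iSup_nat]
  refine iSup_le fun t => ?_
  calc ∑ s ∈ range t, freeProb1 G πC πR init s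
      ≤ ∑ s ∈ range t, freeProb1 G πC πR init s + expectPos G πC πR init U t := le_self_add
    _ ≤ expectPos G πC πR init U 0 := sum_range_add_le_of_add_succ_le hstep t
    _ = U init := expectPos_zero ..

end Verification

section ValueIteration

variable (G : SimpleGraph V) [DecidableRel G.Adj] [Nonempty V]

def shapley (f : V × V → ℝ) (p : V × V) : ℝ :=
  if p.1 = p.2 then 0 else 1 + MatrixGame.value fun u w => f (step1 G p u w)

/-- The value of the game stopped after `n` rounds. -/
def truncValue (n : ℕ) : V × V → ℝ := (shapley G)^[n] 0

def limValue (p : V × V) : ℝ≥0∞ := ⨆ n, ENNReal.ofReal (truncValue G n p)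

lemma shapley_mono : Monotone (shapley G) := fun f g hfg p => by
  unfold shapley
  split_ifs
  · exact le_rfl
  · exact add_le_add_right (MatrixGame.value_mono fun u w => hfg (step1 G p u w)) 1

lemma truncValue_succ (n : ℕ) : truncValue G (n + 1) = shapley G (truncValue G n) :=
  Function.iterate_succ_apply' ..

lemma truncValue_mono : Monotone (truncValue G) := by
  refine (shapley_mono G).monotone_iterate_of_le_map fun p => ?_
  unfold shapley
  split_ifs
  · exact le_rfl
  · simp [MatrixGame.value_const]

lemma truncValue_nonneg (n : ℕ) (p : V × V) : 0 ≤ truncValue G n p :=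
  truncValue_mono G (Nat.zero_le n) p

lemma truncValue_le (n : ℕ) (p : V × V) : truncValue G n p ≤ n := by
  induction n generalizing p with
  | zero => simp [truncValue]
  | succ n ih =>
    rw [truncValue_succ, shapley]
    split_ifs
    · positivity
    · have := MatrixGame.value_mono (ι := V) (κ := V) fun u w => ih (step1 G p u w)
      rw [MatrixGame.value_const] at this
      push_cast
      linarith

lemma truncValue_of_eq {p : V × V} (hp : p.1 = p.2) (n : ℕ) : truncValue G n p = 0 := by
  cases n with
  | zero => rfl
  | succ n => rw [truncValue_succ, shapley, if_pos hp]

lemma truncValue_succ_of_ne {p : V × V} (hp : p.1 ≠ p.2) (n : ℕ) :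
    truncValue G (n + 1) p = 1 + MatrixGame.value fun u w => truncValue G n (step1 G p u w) := by
  rw [truncValue_succ, shapley, if_neg hp]

lemma ofReal_truncValue_le_limValue (n : ℕ) (p : V × V) :
    ENNReal.ofReal (truncValue G n p) ≤ limValue G p :=
  le_iSup (fun n => ENNReal.ofReal (truncValue G n p)) n

end ValueIteration

section Strategies

variable (G : SimpleGraph V) [DecidableRel G.Adj] [Nonempty V]

def robberKernel (N : ℕ) (p : V × V) : PMF V :=
  PMF.ofStdSimplex (MatrixGame.maximizer_mem fun u w => truncValue G N (step1 G p u w))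

lemma ofReal_truncValue_le_expect_robberKernel (N : ℕ) (p : V × V) (u : V) :
    ENNReal.ofReal (truncValue G N p) ≤ freeInd p +
      (robberKernel G N p).expect fun w => ENNReal.ofReal (truncValue G N (step1 G p u w)) := by
  by_cases hp : p.1 = p.2
  · simp [truncValue_of_eq G hp]
  have hnonneg := fun w => truncValue_nonneg G N (step1 G p u w)
  rw [robberKernel, PMF.expect_ofStdSimplex_ofReal _ hnonneg, freeInd, if_neg hp,
    ← ENNReal.ofReal_one, ← ENNReal.ofReal_add zero_le_one
      (sum_nonneg fun w _ => mul_nonneg ((MatrixGame.maximizer_mem _).1 w) (hnonneg w))]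
  refine ENNReal.ofReal_le_ofReal ?_
  calc truncValue G N p ≤ truncValue G (N + 1) p := truncValue_mono G N.le_succ p
    _ = 1 + MatrixGame.value fun u w => truncValue G N (step1 G p u w) :=
        truncValue_succ_of_ne G hp N
    _ ≤ _ := by gcongr; exact MatrixGame.value_le_sum_maximizer _ u

theorem ofReal_truncValue_le_payoff (N : ℕ) (p₀ : V × V) (πC : Strat V) (init : V × V) :
    ENNReal.ofReal (truncValue G N init) ≤ payoff G πC (kernelStrat p₀ (robberKernel G N)) init := by
  refine le_payoff_of_subsolution G _ (ENNReal.natCast_ne_top N) (fun p => ?_) _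
    (ofReal_truncValue_le_expect_robberKernel G N) p₀ πC init
  by_cases hp : p.1 = p.2
  · simp [truncValue_of_eq G hp]
  rw [freeInd, if_neg hp, mul_one, ← ENNReal.ofReal_natCast]
  exact ENNReal.ofReal_le_ofReal (truncValue_le G N p)

/-- A cluster point, by compactness of the simplex, of the cop's optimal strategies in the
one-round games valued by `truncValue G m`. -/
lemma exists_stdSimplex_forall_le_limValue {p : V × V} (hp : p.1 ≠ p.2) :
    ∃ α ∈ stdSimplex ℝ V, ∀ m w,
      ENNReal.ofReal (1 + ∑ u, α u * truncValue G m (step1 G p u w)) ≤ limValue G p := by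
  let K : ℕ → Set (V → ℝ) := fun m => stdSimplex ℝ V ∩ ⋂ w,
    {α | ENNReal.ofReal (1 + ∑ u, α u * truncValue G m (step1 G p u w)) ≤ limValue G p}
  have hK_anti : ∀ m, K (m + 1) ⊆ K m := by
    rintro m α ⟨hα, hle⟩
    simp only [Set.mem_iInter, Set.mem_ofPred_eq] at hle
    refine ⟨hα, Set.mem_iInter.2 fun w => le_trans ?_ (hle w)⟩
    gcongr with u
    exacts [hα.1 u, truncValue_mono G m.le_succ _]
  have hK_nonempty : ∀ m, (K m).Nonempty := by
    refine fun m => ⟨_, MatrixGame.minimizer_mem fun u w => truncValue G m (step1 G p u w),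
      Set.mem_iInter.2 fun w => ?_⟩
    refine le_trans ?_ (ofReal_truncValue_le_limValue G (m + 1) p)
    rw [truncValue_succ_of_ne G hp]
    gcongr
    exact MatrixGame.sum_minimizer_le_value _ w
  have hK_closed : ∀ m, IsClosed (K m) := fun m =>
    (isClosed_stdSimplex ℝ V).inter <| isClosed_iInter fun w =>
      isClosed_le (ENNReal.continuous_ofReal.comp (by fun_prop)) continuous_const
  obtain ⟨α, hα⟩ := IsCompact.nonempty_iInter_of_sequence_nonempty_isCompact_isClosed K hK_anti
    hK_nonempty ((isCompact_stdSimplex ℝ V).of_isClosed_subset (hK_closed 0)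
      Set.inter_subset_left) hK_closed
  rw [Set.mem_iInter] at hα
  exact ⟨α, (hα 0).1, fun m => Set.mem_iInter.1 (hα m).2⟩

lemma exists_kernel_supersolution_limValue : ∃ α : V × V → PMF V, ∀ p w,
    freeInd p + (α p).expect (fun u => limValue G (step1 G p u w)) ≤ limValue G p := by
  suffices ∀ p, ∃ μ : PMF V, ∀ w,
      freeInd p + μ.expect (fun u => limValue G (step1 G p u w)) ≤ limValue G p from
    ⟨fun p => (this p).choose, fun p => (this p).choose_spec⟩
  intro p
  by_cases hp : p.1 = p.2
  · refine ⟨PMF.pure p.1, fun w => ?_⟩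
    simp [freeInd, hp, step1_of_eq G hp, PMF.expect_pure]
  obtain ⟨α, hα, hle⟩ := exists_stdSimplex_forall_le_limValue G hp
  refine ⟨PMF.ofStdSimplex hα, fun w => ?_⟩
  have hlim : (PMF.ofStdSimplex hα).expect (fun u => limValue G (step1 G p u w)) =
      ⨆ m, ENNReal.ofReal (∑ u, α u * truncValue G m (step1 G p u w)) := by
    simp_rw [← PMF.expect_ofStdSimplex_ofReal hα fun u => truncValue_nonneg G _ (step1 G p u w),
      PMF.expect_ofStdSimplex, limValue, ENNReal.mul_iSup]
    refine ENNReal.finsetSum_iSup_of_monotone fun u m n hmn => ?_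
    gcongr
    exact truncValue_mono G hmn _
  rw [hlim, freeInd, if_neg hp, ENNReal.add_iSup]
  refine iSup_le fun m => le_trans (le_of_eq ?_) (hle m w)
  rw [ENNReal.ofReal_add zero_le_one
    (sum_nonneg fun u _ => mul_nonneg (hα.1 u) (truncValue_nonneg G _ _)), ENNReal.ofReal_one]

lemma gameValue_le_limValue (init : V × V) : gameValue G init ≤ limValue G init := by
  obtain ⟨α, hα⟩ := exists_kernel_supersolution_limValue G
  exact (iInf_le _ (kernelStrat init α)).trans
    (iSup_le fun πR => payoff_le_of_supersolution G _ α hα init πR init)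

end Strategies

lemma ENNReal.exists_sub_le_of_le_iSup {ι : Type*} [Nonempty ι] {f : ι → ℝ≥0∞} {a ε : ℝ≥0∞}
    (ha : a ≠ ⊤) (hε : ε ≠ 0) (h : a ≤ ⨆ i, f i) : ∃ i, a - ε ≤ f i := by
  rcases eq_or_ne a 0 with rfl | ha₀
  · exact ⟨Classical.arbitrary ι, by simp⟩
  obtain ⟨i, hi⟩ := lt_iSup_iff.1 ((ENNReal.sub_lt_self ha ha₀ hε).trans_le h)
  exact ⟨i, hi.le⟩

lemma exists_gameValue_sub_le_truncValue (G : SimpleGraph V) [DecidableRel G.Adj] [Nonempty V]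
    {ε : ℝ≥0∞} (hε : ε ≠ 0) :
    ∃ N, ∀ p, gameValue G p < ⊤ → gameValue G p - ε ≤ ENNReal.ofReal (truncValue G N p) := by
  have : ∀ p, ∃ N, gameValue G p < ⊤ →
      gameValue G p - ε ≤ ENNReal.ofReal (truncValue G N p) := by
    intro p
    by_cases hp : gameValue G p < ⊤
    · obtain ⟨N, hN⟩ := ENNReal.exists_sub_le_of_le_iSup hp.ne hε (gameValue_le_limValue G p)
      exact ⟨N, fun _ => hN⟩
    · exact ⟨0, fun h => absurd h hp⟩
  choose Np hNp using this
  refine ⟨univ.sup Np, fun p hp => (hNp p hp).trans ?_⟩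
  exact ENNReal.ofReal_le_ofReal (truncValue_mono G (le_sup (mem_univ p)) p)

/-- for every `ε > 0` there exists a memoryless randomized robber
strategy which is `ε`-optimal simultaneously for every initial position with finite
value. -/
theorem exists_memoryless_eps_optimal_robber_strategy (G : SimpleGraph V)
    [DecidableRel G.Adj] (hconn : G.Connected) :
    ∀ ε : ENNReal, 0 < ε →
      ∃ πR : Strat V, Memoryless πR ∧
        ∀ init : V × V, gameValue G init < ⊤ →
          gameValue G init - ε ≤ ⨅ πC : Strat V, payoff G πC πR init := by
  intro ε hε
  have := hconn.nonempty
  obtain ⟨N, hN⟩ := exists_gameValue_sub_le_truncValue G hε.ne'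
  refine ⟨kernelStrat (Classical.arbitrary _) (robberKernel G N), kernelStrat_memoryless _ _,
    fun init hinit => ?_⟩
  exact (hN init hinit).trans (le_iInf fun πC => ofReal_truncValue_le_payoff G N _ πC init)
end
end

section
/- Let σ : V × V → V satisfy σ(x,y) ∈ N[x] for all x,y ∈ V, and let T ∈ ℕ be such that σ guarantees capture within T rounds in the turn-based game: for all x₀,y₀ ∈ V and every sequence (y_t)_{t≥0} with y_{t+1} ∈ N[y_t] for all t, the sequence defined by x_{t+1} = σ(x_t, y_t) satisfies x_{t+1} = y_t for some t < T. Let π_C^# be the memoryless randomized cop strategy in the concurrent game defined by: from position (x,y), sample a vertex v uniformly at random from N[y] and move the cop to σ(x,v). Then there is a finite constant M (depending only on G and T) such that for every robber strategy π_R and every initial position (x,y) ∈ V², the expected capture time satisfies v_{(x,y)}(π_C^#, π_R) ≤ Σ_{k=1}^∞ k·T·(1 − (1/n)^T)^k ≤ M < ∞, where n = |V|. -/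
open Finset Filter

noncomputable section

variable {V : Type*} [Fintype V] [DecidableEq V]

/-- The cop trajectory generated in the turn-based game by the positional cop strategy
`σ` from initial cop position `x₀`, against robber trajectory `ys`:
`x_{t+1} = σ (x_t, y_t)`. -/
def copSeq (σ : V × V → V) (x₀ : V) (ys : ℕ → V) : ℕ → V
  | 0 => x₀
  | (t+1) => σ (copSeq σ x₀ ys t, ys t)

/-- The memoryless randomized cop strategy `π_C^#` for the concurrent game: from
position `(x, y)`, sample a vertex `v` uniformly at random from `N[y]` and move the
cop to `σ (x, v)`. -/
def piCSharp (G : SimpleGraph V) [DecidableRel G.Adj] [Nonempty V]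
    (σ : V × V → V) : Strat V := fun h =>
  match h.getLast? with
  | some p => (PMF.uniformOfFinset (nbhd G p.2) (nbhd_nonempty G p.2)).map fun v => σ (p.1, v)
  | none => PMF.uniformOfFintype V

/-!
In each round the cop guesses the robber's next vertex uniformly in `N[y]` and answers the
guess with `σ`. A guess is right with probability at least `1/n`, and a cop whose guesses are
all right plays `σ` against the robber's actual trajectory, which captures within `T` rounds.
So each block of `T` rounds ends in capture with probability at least `q = n⁻ᵀ`, the robber
survives `kT` rounds with probability at most `(1 - q)ᵏ`, and the expected capture time is at
most `T / q`. For `n ≥ 2` we have `q ≤ 1/2`, whence `T / q ≤ T (1 - q) / q² = ∑ₖ k T (1 - q)ᵏ`;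
for `n = 1` the robber starts captured.
-/

open scoped ENNReal

namespace PMF

variable {α : Type*}

lemma toOuterMeasure_apply_le_one (p : PMF α) (s : Set α) : p.toOuterMeasure s ≤ 1 :=
  (p.toOuterMeasure.mono (Set.subset_univ s)).trans_eq
    ((p.toOuterMeasure_apply_eq_one_iff _).2 (Set.subset_univ _))

lemma tsum_mul_le_of_le (p : PMF α) {f : α → ℝ≥0∞} {B : ℝ≥0∞} (hf : ∀ a, f a ≤ B) :
    ∑' a, p a * f a ≤ B :=
  calc ∑' a, p a * f a ≤ ∑' a, p a * B := ENNReal.tsum_le_tsum fun a => by gcongr; exact hf a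
    _ = B := by rw [ENNReal.tsum_mul_right, p.tsum_coe, one_mul]

lemma tsum_mul_le_one_sub (p : PMF α) {f : α → ℝ≥0∞} {c : ℝ≥0∞} (a : α) (hf : ∀ b, f b ≤ 1)
    (hc : c ≤ 1) (hfa : f a ≤ 1 - c) :
    ∑' b, p b * f b ≤ 1 - p a * c := by
  classical
  refine ENNReal.le_sub_of_add_le_right (ENNReal.mul_ne_top (p.apply_ne_top a)
    (ne_top_of_le_ne_top ENNReal.one_ne_top hc)) ?_
  have hle : ∀ b, f b + (if b = a then c else 0) ≤ 1 := fun b => by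
    split_ifs with hb
    · subst hb
      calc f b + c ≤ 1 - c + c := by gcongr
        _ = 1 := tsub_add_cancel_of_le hc
    · simpa using hf b
  calc ∑' b, p b * f b + p a * c
      = ∑' b, p b * (f b + if b = a then c else 0) := by
        simp only [mul_add, ENNReal.tsum_add, mul_ite, mul_zero, tsum_ite_eq]
    _ ≤ 1 := p.tsum_mul_le_of_le hle

end PMF

namespace ENNReal

lemma tsum_natCast_mul_pow {r : ℝ≥0∞} (hr : r < 1) :
    ∑' k : ℕ, (k : ℝ≥0∞) * r ^ k = r * (1 - r)⁻¹ ^ 2 := by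
  lift r to NNReal using hr.ne_top
  have hr' : r < 1 := by exact_mod_cast hr
  have hnorm : ‖(r : ℝ)‖ < 1 := by rw [Real.norm_eq_abs, NNReal.abs_eq]; exact_mod_cast hr'
  have hs : Summable fun k : ℕ => (k : NNReal) * r ^ k := by
    rw [← NNReal.summable_coe]
    push_cast
    simpa using summable_pow_mul_geometric_of_norm_lt_one 1 hnorm
  have hsum : ∑' k : ℕ, (k : NNReal) * r ^ k = r / (1 - r) ^ 2 := by
    rw [← NNReal.coe_inj, NNReal.coe_tsum]
    push_cast
    rw [tsum_coe_mul_geometric_of_norm_lt_one hnorm, NNReal.coe_sub hr'.le]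
    simp
  have hpos : (1 - r : NNReal) ≠ 0 := (tsub_pos_of_lt hr').ne'
  rw [← ENNReal.coe_one, ← ENNReal.coe_sub]
  simp_rw [← ENNReal.coe_natCast, ← ENNReal.coe_pow, ← ENNReal.coe_mul]
  rw [← ENNReal.coe_tsum hs, hsum, ← ENNReal.coe_inv hpos, ← ENNReal.coe_pow, ← ENNReal.coe_mul,
    div_eq_mul_inv, inv_pow]

lemma tsum_le_of_le_pow_div {f : ℕ → ℝ≥0∞} {r : ℝ≥0∞} {T : ℕ} (hT : 0 < T)
    (hf : ∀ t, f t ≤ r ^ (t / T)) :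
    ∑' t, f t ≤ T * (1 - r)⁻¹ := by
  have : NeZero T := ⟨hT.ne'⟩
  calc ∑' t, f t = ∑' p : ℕ × Fin T, f (p.1 * T + p.2) :=
        ((Nat.divModEquiv T).symm.tsum_eq f).symm
    _ ≤ ∑' p : ℕ × Fin T, r ^ p.1 := ENNReal.tsum_le_tsum fun p => by
        rw [add_comm]
        refine (hf _).trans_eq ?_
        rw [Nat.add_mul_div_right _ _ hT, Nat.div_eq_of_lt p.2.2, zero_add]
    _ = T * (1 - r)⁻¹ := by
        rw [ENNReal.tsum_prod', ← ENNReal.tsum_geometric, ← ENNReal.tsum_mul_left]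
        simp

lemma tsum_natCast_mul_pow_lt_top {r : ℝ≥0∞} (hr : r < 1) :
    ∑' k : ℕ, (k : ℝ≥0∞) * r ^ k < ⊤ := by
  rw [tsum_natCast_mul_pow hr]
  exact mul_lt_top (hr.trans one_lt_top) (pow_lt_top (inv_lt_top.2 (tsub_pos_of_lt hr)))

lemma inv_le_tsum_natCast_mul_one_sub_pow {q : ℝ≥0∞} (hq0 : q ≠ 0) (hq : q ≤ 2⁻¹) :
    q⁻¹ ≤ ∑' k : ℕ, (k : ℝ≥0∞) * (1 - q) ^ k := by
  have hq1 : q ≤ 1 := hq.trans (by norm_num)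
  have hqtop : q ≠ ⊤ := ne_top_of_le_ne_top one_ne_top hq1
  rw [tsum_natCast_mul_pow (ENNReal.sub_lt_self one_ne_top one_ne_zero hq0),
    sub_sub_cancel one_ne_top hq1]
  calc q⁻¹ = q * q⁻¹ ^ 2 := by rw [sq, ← mul_assoc, ENNReal.mul_inv_cancel hq0 hqtop, one_mul]
    _ ≤ (1 - q) * q⁻¹ ^ 2 := by
      gcongr
      refine le_sub_of_add_le_left hqtop ?_
      calc q + q ≤ 2⁻¹ + 2⁻¹ := add_le_add hq hq
        _ = 1 := ENNReal.inv_two_add_inv_two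

end ENNReal

lemma copSeq_cons {α : Type*} (σ : α × α → α) (x y : α) (ys : ℕ → α) (t : ℕ) :
    copSeq σ x (fun | 0 => y | s + 1 => ys s) (t + 1) = copSeq σ (σ (x, y)) ys t := by
  induction t with
  | zero => rfl
  | succ t ih => exact congrArg (fun z => σ (z, ys t)) ih

section TurnBased

variable (G : SimpleGraph V) [DecidableRel G.Adj] (σ : V × V → V)

/-- From cop position `x` and robber position `y`, robber to move, `σ` captures every legal
robber trajectory within `j` cop moves. -/
def CapturesWithin (j : ℕ) (x y : V) : Prop :=
  ∀ ys : ℕ → V, ys 0 ∈ nbhd G y → (∀ t, ys (t + 1) ∈ nbhd G (ys t)) →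
    ∃ t < j, copSeq σ x ys (t + 1) = ys t

variable {G σ}

lemma CapturesWithin.pos {j : ℕ} {x y : V} (h : CapturesWithin G σ j x y) : 0 < j := by
  obtain ⟨t, ht, -⟩ := h (fun _ => y) (mem_insert_self _ _) fun _ => mem_insert_self _ _
  omega

lemma CapturesWithin.of_succ {j : ℕ} {x y y' : V} (h : CapturesWithin G σ (j + 1) x y)
    (hy' : y' ∈ nbhd G y) (hne : σ (x, y') ≠ y') : CapturesWithin G σ j (σ (x, y')) y' := by
  intro ys hys0 hys
  obtain ⟨t, ht, hcap⟩ := h (fun | 0 => y' | s + 1 => ys s) hy' fun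
    | 0 => hys0
    | s + 1 => hys s
  cases t with
  | zero => exact absurd hcap hne
  | succ t => exact ⟨t, by omega, by rwa [copSeq_cons σ] at hcap⟩

end TurnBased

section Play

variable (G : SimpleGraph V) [DecidableRel G.Adj] (πC πR : Strat V) (init : V × V)

def freeSet : Set (List (V × V)) :=
  {h | (h.getLast?.getD init).1 ≠ (h.getLast?.getD init).2}

def playRound (h : List (V × V)) : PMF (List (V × V)) :=
  (πC h).bind fun u => (πR h).bind fun w => PMF.pure (h ++ [step1 G (h.getLast?.getD init) u w])

def playFrom : ℕ → List (V × V) → PMF (List (V × V))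
  | 0, h => PMF.pure h
  | j + 1, h => (playRound G πC πR init h).bind (playFrom j)

def freeProbFrom (j : ℕ) (h : List (V × V)) : ℝ≥0∞ :=
  (playFrom G πC πR init j h).toOuterMeasure (freeSet init)

lemma freeProb1_eq (t : ℕ) :
    freeProb1 G πC πR init t = (play1 G πC πR init t).toOuterMeasure (freeSet init) :=
  rfl

lemma play1_add (t j : ℕ) :
    play1 G πC πR init (t + j) = (play1 G πC πR init t).bind (playFrom G πC πR init j) := by
  induction j generalizing t with
  | zero => exact (PMF.bind_pure _).symm
  | succ j ih =>
    rw [← add_assoc, add_right_comm, ih (t + 1)]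
    exact PMF.bind_bind _ _ _

lemma freeProb1_add (t j : ℕ) :
    freeProb1 G πC πR init (t + j) =
      ∑' h, play1 G πC πR init t h * freeProbFrom G πC πR init j h := by
  rw [freeProb1_eq, play1_add, PMF.toOuterMeasure_bind_apply]
  rfl

lemma freeProbFrom_le_one (j : ℕ) (h : List (V × V)) : freeProbFrom G πC πR init j h ≤ 1 :=
  PMF.toOuterMeasure_apply_le_one _ _

lemma mem_support_playRound {h h' : List (V × V)}
    (hh' : h' ∈ (playRound G πC πR init h).support) :
    ∃ u w, h' = h ++ [step1 G (h.getLast?.getD init) u w] := by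
  simp only [playRound, PMF.support_bind, PMF.support_pure, Set.mem_iUnion,
    Set.mem_singleton_iff, exists_prop] at hh'
  obtain ⟨u, -, w, -, rfl⟩ := hh'
  exact ⟨u, w, rfl⟩

lemma freeProbFrom_eq_zero_of_notMem {h : List (V × V)} (hh : h ∉ freeSet init) (j : ℕ) :
    freeProbFrom G πC πR init j h = 0 := by
  induction j generalizing h with
  | zero => rw [freeProbFrom, playFrom, PMF.toOuterMeasure_pure_apply, if_neg hh]
  | succ j ih =>
    rw [freeProbFrom, playFrom, PMF.toOuterMeasure_bind_apply]
    refine ENNReal.tsum_eq_zero.2 fun h' => ?_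
    by_cases hh' : h' ∈ (playRound G πC πR init h).support
    · obtain ⟨u, w, rfl⟩ := mem_support_playRound G πC πR init hh'
      have hcaught : (h.getLast?.getD init).1 = (h.getLast?.getD init).2 := not_not.1 hh
      refine mul_eq_zero_of_right _ (ih ?_)
      simp [freeSet, step1, hcaught]
    · exact mul_eq_zero_of_left ((PMF.apply_eq_zero_iff _ _).2 hh') _

lemma freeProb1_add_le_mul {t j : ℕ} {c : ℝ≥0∞}
    (hc : ∀ h ∈ (play1 G πC πR init t).support, h ∈ freeSet init →
      freeProbFrom G πC πR init j h ≤ c) :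
    freeProb1 G πC πR init (t + j) ≤ c * freeProb1 G πC πR init t := by
  rw [freeProb1_add, freeProb1_eq, PMF.toOuterMeasure_apply, ← ENNReal.tsum_mul_left]
  refine ENNReal.tsum_le_tsum fun h => ?_
  by_cases hh : h ∈ freeSet init
  · rw [Set.indicator_of_mem hh, mul_comm]
    by_cases hs : h ∈ (play1 G πC πR init t).support
    · gcongr
      exact hc h hs hh
    · simp [(PMF.apply_eq_zero_iff _ _).2 hs]
  · simp [freeProbFrom_eq_zero_of_notMem G πC πR init hh]

lemma freeProb1_antitone : Antitone (freeProb1 G πC πR init) :=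
  antitone_nat_of_succ_le fun t => by
    simpa using freeProb1_add_le_mul G πC πR init fun h _ _ =>
      freeProbFrom_le_one G πC πR init 1 h

lemma payoff_eq_zero_of_subsingleton [Subsingleton V] : payoff G πC πR init = 0 :=
  ENNReal.tsum_eq_zero.2 fun _ => (PMF.toOuterMeasure_apply_eq_zero_iff _ _).2
    (Set.disjoint_left.2 fun _ _ hh => hh (Subsingleton.elim _ _))

end Play

lemma step1_of_mem_nbhd {G : SimpleGraph V} [DecidableRel G.Adj] {x y u : V} (hxy : x ≠ y)
    (hu : u ∈ nbhd G x) (w : V) :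
    (step1 G (x, y) u w).1 = (step1 G (x, y) u w).2 ∨
      step1 G (x, y) u w = (u, if w ∈ nbhd G y then w else y) := by
  simp only [step1, hxy, hu, if_false, if_true]
  split_ifs <;> simp

section Sharp

variable {G : SimpleGraph V} [DecidableRel G.Adj] [Nonempty V] {σ : V × V → V} {T : ℕ}

lemma playRound_piCSharp (πR : Strat V) (init : V × V) {h : List (V × V)} {x y : V}
    (hh : h.getLast? = some (x, y)) :
    playRound G (piCSharp G σ) πR init h =
      (πR h).bind fun w => (PMF.uniformOfFinset (nbhd G y) (nbhd_nonempty G y)).bind fun v =>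
        PMF.pure (h ++ [step1 G (x, y) (σ (x, v)) w]) := by
  simp only [playRound, piCSharp, hh, Option.getD_some, PMF.map, PMF.bind_bind, PMF.pure_bind,
    Function.comp_def]
  exact PMF.bind_comm _ _ _

/-- With probability at least `n⁻¹` per round the cop's guess `v` is the robber's actual move,
and then `π_C^#` moves exactly as `σ` does in the turn-based game. -/
lemma freeProbFrom_piCSharp_le (hσ : ∀ x y, σ (x, y) ∈ nbhd G x) (πR : Strat V)
    (init : V × V) (j : ℕ) {h : List (V × V)} {x y : V} (hh : h.getLast? = some (x, y))
    (hxy : x ≠ y) (hcap : CapturesWithin G σ j x y) :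
    freeProbFrom G (piCSharp G σ) πR init j h ≤ 1 - (Fintype.card V : ℝ≥0∞)⁻¹ ^ j := by
  induction j generalizing h x y with
  | zero => exact absurd hcap.pos (lt_irrefl 0)
  | succ j ih =>
    rw [freeProbFrom, playFrom, playRound_piCSharp πR init hh]
    simp only [PMF.bind_bind, PMF.pure_bind, PMF.toOuterMeasure_bind_apply]
    refine (πR h).tsum_mul_le_of_le fun w => ?_
    set y' := if w ∈ nbhd G y then w else y with hy'_def
    have hy' : y' ∈ nbhd G y := by
      rw [hy'_def]
      split_ifs with hw
      exacts [hw, mem_insert_self _ _]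
    have hguess : freeProbFrom G (piCSharp G σ) πR init j
        (h ++ [step1 G (x, y) (σ (x, y')) w]) ≤ 1 - (Fintype.card V : ℝ≥0∞)⁻¹ ^ j := by
      have hcaught (p : V × V) (hp : p.1 = p.2) :
          freeProbFrom G (piCSharp G σ) πR init j (h ++ [p]) = 0 :=
        freeProbFrom_eq_zero_of_notMem G _ πR init (by simpa [freeSet] using hp) j
      rcases step1_of_mem_nbhd hxy (hσ x y') w with hc | heq
      · simp [hcaught _ hc]
      · rw [heq, ← hy'_def]
        by_cases hc : σ (x, y') = y'
        · simp [hcaught (σ (x, y'), y') hc]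
        · exact ih List.getLast?_concat hc (hcap.of_succ hy' hc)
    refine (PMF.tsum_mul_le_one_sub (f := fun v => freeProbFrom G (piCSharp G σ) πR init j
      (h ++ [step1 G (x, y) (σ (x, v)) w])) _ y' (fun _ => freeProbFrom_le_one G _ πR init j _)
      (pow_le_one₀ zero_le (ENNReal.inv_le_one.2 (by exact_mod_cast Fintype.card_pos)))
      hguess).trans ?_
    rw [PMF.uniformOfFinset_apply_of_mem _ hy', pow_succ']
    gcongr
    exact card_le_univ _

lemma freeProb1_piCSharp_mul_le_pow (hσ : ∀ x y, σ (x, y) ∈ nbhd G x)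
    (hcap : ∀ x y, CapturesWithin G σ T x y) (πR : Strat V) (init : V × V) (k : ℕ) :
    freeProb1 G (piCSharp G σ) πR init (k * T) ≤ (1 - (Fintype.card V : ℝ≥0∞)⁻¹ ^ T) ^ k := by
  induction k with
  | zero =>
    rw [zero_mul, pow_zero]
    exact PMF.toOuterMeasure_apply_le_one _ _
  | succ k ih =>
    rw [add_mul, one_mul, pow_succ']
    refine (freeProb1_add_le_mul G _ πR init fun h hs hfree => ?_).trans (by gcongr)
    obtain ⟨⟨x, y⟩, hh⟩ : ∃ p, h.getLast? = some p :=
      ⟨_, List.getLast?_eq_some_getLast (ne_nil_of_mem_support_play1 G _ πR init hs)⟩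
    exact freeProbFrom_piCSharp_le hσ πR init T hh (by simpa [freeSet, hh] using hfree) (hcap x y)

lemma payoff_piCSharp_le (hσ : ∀ x y, σ (x, y) ∈ nbhd G x)
    (hcap : ∀ x y, CapturesWithin G σ T x y) (πR : Strat V) (init : V × V) :
    payoff G (piCSharp G σ) πR init ≤ T * ((Fintype.card V : ℝ≥0∞)⁻¹ ^ T)⁻¹ := by
  have hq : (Fintype.card V : ℝ≥0∞)⁻¹ ^ T ≤ 1 :=
    pow_le_one₀ zero_le (ENNReal.inv_le_one.2 (by exact_mod_cast Fintype.card_pos))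
  calc payoff G (piCSharp G σ) πR init
      ≤ T * (1 - (1 - (Fintype.card V : ℝ≥0∞)⁻¹ ^ T))⁻¹ :=
        ENNReal.tsum_le_of_le_pow_div (hcap init.1 init.2).pos fun t =>
          (freeProb1_antitone G _ πR init (Nat.div_mul_le_self t T)).trans
            (freeProb1_piCSharp_mul_le_pow hσ hcap πR init _)
    _ = T * ((Fintype.card V : ℝ≥0∞)⁻¹ ^ T)⁻¹ := by
        rw [ENNReal.sub_sub_cancel ENNReal.one_ne_top hq]

end Sharp

theorem payoff_piCSharp_bounded_general (G : SimpleGraph V) [DecidableRel G.Adj] [Nonempty V]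
    (σ : V × V → V) (hσ : ∀ x y : V, σ (x, y) ∈ nbhd G x) (T : ℕ)
    (hT : ∀ (x₀ : V) (ys : ℕ → V), (∀ t, ys (t+1) ∈ nbhd G (ys t)) →
      ∃ t < T, copSeq σ x₀ ys (t+1) = ys t) :
    ∃ M : ENNReal, M < ⊤ ∧
      (∑' k : ℕ, (k : ENNReal) * (T : ENNReal) *
          (1 - ((Fintype.card V : ENNReal))⁻¹ ^ T) ^ k) ≤ M ∧
      ∀ (πR : Strat V) (init : V × V),
        payoff G (piCSharp G σ) πR init ≤
          ∑' k : ℕ, (k : ENNReal) * (T : ENNReal) *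
            (1 - ((Fintype.card V : ENNReal))⁻¹ ^ T) ^ k := by
  have hcap : ∀ x y, CapturesWithin G σ T x y := fun x y ys _ hys => hT x ys hys
  have hT0 : T ≠ 0 := (hcap (Classical.arbitrary V) (Classical.arbitrary V)).pos.ne'
  set q := (Fintype.card V : ℝ≥0∞)⁻¹ ^ T
  have hq0 : q ≠ 0 := pow_ne_zero _ (ENNReal.inv_ne_zero.2 (ENNReal.natCast_ne_top _))
  have hS : ∑' k : ℕ, (k : ℝ≥0∞) * T * (1 - q) ^ k = T * ∑' k : ℕ, (k : ℝ≥0∞) * (1 - q) ^ k := by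
    rw [← ENNReal.tsum_mul_left]
    congr 1 with k
    ring
  refine ⟨_, ?_, le_rfl, fun πR init => ?_⟩
  · rw [hS]
    exact ENNReal.mul_lt_top (ENNReal.natCast_lt_top T) (ENNReal.tsum_natCast_mul_pow_lt_top
      (ENNReal.sub_lt_self ENNReal.one_ne_top one_ne_zero hq0))
  rcases subsingleton_or_nontrivial V with hV | hV
  · rw [payoff_eq_zero_of_subsingleton]
    exact zero_le
  have hq : q ≤ 2⁻¹ :=
    calc q ≤ (Fintype.card V : ℝ≥0∞)⁻¹ :=
          pow_le_of_le_one zero_le (ENNReal.inv_le_one.2 (by exact_mod_cast Fintype.card_pos)) hT0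
      _ ≤ 2⁻¹ := ENNReal.inv_le_inv.2 (by exact_mod_cast Fintype.one_lt_card)
  calc payoff G (piCSharp G σ) πR init ≤ T * q⁻¹ := payoff_piCSharp_le hσ hcap πR init
    _ ≤ _ := by
      rw [hS]
      gcongr
      exact ENNReal.inv_le_tsum_natCast_mul_one_sub_pow hq0 hq

/-- if the positional cop strategy `σ` guarantees capture within `T`
rounds in the turn-based game, then there is a finite constant `M` (depending only on
`G` and `T`) such that, under the memoryless randomized strategy `π_C^#`, the expected
capture time from every initial position and against every robber strategy is at most
`Σ_{k=1}^∞ k·T·(1 − (1/n)^T)^k ≤ M < ∞`, where `n = |V|`. -/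
theorem payoff_piCSharp_bounded (G : SimpleGraph V) [DecidableRel G.Adj] [Nonempty V]
    (hconn : G.Connected) (σ : V × V → V) (hσ : ∀ x y : V, σ (x, y) ∈ nbhd G x) (T : ℕ)
    (hT : ∀ (x₀ : V) (ys : ℕ → V), (∀ t, ys (t+1) ∈ nbhd G (ys t)) →
      ∃ t < T, copSeq σ x₀ ys (t+1) = ys t) :
    ∃ M : ENNReal, M < ⊤ ∧
      (∑' k : ℕ, (k : ENNReal) * (T : ENNReal) *
          (1 - ((Fintype.card V : ENNReal))⁻¹ ^ T) ^ k) ≤ M ∧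
      ∀ (πR : Strat V) (init : V × V),
        payoff G (piCSharp G σ) πR init ≤
          ∑' k : ℕ, (k : ENNReal) * (T : ENNReal) *
            (1 - ((Fintype.card V : ENNReal))⁻¹ ^ T) ^ k :=
  payoff_piCSharp_bounded_general G σ hσ T hT
end
end
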